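/- Let F be a field of prime characteristic p, let n and k be integers with 1 < n < p and k > n + 1, and let g(x) ∈ F[x] be a monic polynomial of degree n − 1 such that the coefficient of x^j in (x−1)^k g(x) is zero for every integer j with (k+n)/2 ≤ j < k. If k = q − p + k0 for some power q = p^c of p with q > p and some integer k0 with p − n < k0 < p, then (x − 1)^{p−k0} divides g(x). -/

import Mathlib

/-!
Write `g = (X - 1)^m h` with `m < r := p - k0` and put `e = r - m`, `f = (X - 1)^k g`.
In characteristic `p` we have `(X - 1)^(k + r) = (X - 1)^q = X^q - 1`, hence
`(X - 1)^e f = (X^q - 1) h`. Replacing `f` by its part `A` of degree `< (k + n)/2` changes this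
only in degrees `≥ k`, so `(X - 1)^e A + h ≡ X^q h ≡ 0 (mod X^k)`. Since `q ≥ p^2` makes `k`
large compared with `n`, the left side has degree `< k` and therefore vanishes; evaluating at `1`
gives `h(1) = 0`. So the multiplicity of `1` as a root of `g` keeps growing until it reaches `r`.
-/

open Polynomial

namespace Polynomial

variable {R : Type*} [CommRing R]

theorem X_pow_dvd_sub_modByMonic_X_pow {f : R[X]} {M k : ℕ}
    (hcoeff : ∀ j, M ≤ j → j < k → f.coeff j = 0) : X ^ k ∣ f - f %ₘ X ^ M := by
  nontriviality R
  rw [X_pow_dvd_iff]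
  intro d hd
  rcases lt_or_ge d M with hdM | hdM
  · rw [modByMonic_eq_sub_mul_div f (X ^ M), sub_sub_cancel, coeff_X_pow_mul',
      if_neg (by omega)]
  · have hmod : (f %ₘ X ^ M).coeff d = 0 := coeff_eq_zero_of_degree_lt <|
      (degree_modByMonic_lt f (monic_X_pow M)).trans_le (by simpa using hdM)
    rw [coeff_sub, hmod, hcoeff d hdM hd, sub_zero]

theorem monic_X_sub_one_pow (e : ℕ) : ((X - 1 : R[X]) ^ e).Monic := by
  simpa using (monic_X_sub_C (1 : R)).pow e

theorem degree_sub_one_pow_mul_lt {A : R[X]} {e M : ℕ} (hA : A.degree < M) :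
    ((X - 1 : R[X]) ^ e * A).degree < ↑(e + M) := by
  nontriviality R
  have hdeg : ((X - 1 : R[X]) ^ e).degree = e := by
    rw [← C_1, degree_pow' (by rw [leadingCoeff_X_sub_C, one_pow]; exact one_ne_zero),
      degree_X_sub_C, nsmul_one]
  rw [mul_comm, (monic_X_sub_one_pow e).degree_mul, hdeg, Nat.cast_add, add_comm (e : WithBot ℕ)]
  exact WithBot.add_lt_add_right WithBot.coe_ne_bot hA

theorem eq_zero_of_X_pow_dvd_of_degree_lt {P : R[X]} {k : ℕ} (hdvd : X ^ k ∣ P)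
    (hdeg : P.degree < k) : P = 0 := by
  ext d
  rcases lt_or_ge d k with hd | hd
  · exact X_pow_dvd_iff.mp hdvd d hd
  · exact coeff_eq_zero_of_degree_lt (hdeg.trans_le (by exact_mod_cast hd))

theorem eval_one_eq_zero_of_coeff_sub_one_pow_mul_eq_zero {h : R[X]} {k r m M : ℕ}
    (hfrob : (X - 1 : R[X]) ^ (k + r) = X ^ (k + r) - 1) (hm : m < r) (hM : r + M ≤ k)
    (hh : h.natDegree < k)
    (hcoeff : ∀ j, M ≤ j → j < k → ((X - 1) ^ k * ((X - 1) ^ m * h)).coeff j = 0) :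
    h.eval 1 = 0 := by
  nontriviality R
  set f := (X - 1 : R[X]) ^ k * ((X - 1) ^ m * h)
  set A := f %ₘ X ^ M
  set e := r - m
  obtain ⟨Q, hQ⟩ := X_pow_dvd_sub_modByMonic_X_pow hcoeff
  have hident : (X - 1) ^ e * f = (X ^ (k + r) - 1) * h := by
    rw [← hfrob, show k + r = e + k + m by omega]
    ring
  have hdvd : X ^ k ∣ (X - 1) ^ e * A + h :=
    ⟨X ^ r * h - (X - 1) ^ e * Q, by linear_combination hident - (X - 1) ^ e * hQ⟩
  have hA : A.degree < M := by simpa using degree_modByMonic_lt f (monic_X_pow M)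
  have hdeg : ((X - 1) ^ e * A + h).degree < (k : WithBot ℕ) :=
    (degree_add_le _ _).trans_lt <| max_lt
      ((degree_sub_one_pow_mul_lt hA).trans_le
        (by exact_mod_cast (by omega : e + M ≤ k)))
      (degree_le_natDegree.trans_lt (by exact_mod_cast hh))
  simpa [zero_pow (by omega : e ≠ 0)] using
    congrArg (eval 1) (eq_zero_of_X_pow_dvd_of_degree_lt hdvd hdeg)

theorem sub_one_pow_dvd_of_coeff_sub_one_pow_mul_eq_zero {g : R[X]} {k r M : ℕ}
    (hfrob : (X - 1 : R[X]) ^ (k + r) = X ^ (k + r) - 1) (hM : r + M ≤ k)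
    (hdeg : g.natDegree < k)
    (hcoeff : ∀ j, M ≤ j → j < k → ((X - 1) ^ k * g).coeff j = 0) :
    (X - 1) ^ r ∣ g := by
  suffices ∀ m ≤ r, (X - 1 : R[X]) ^ m ∣ g from this r le_rfl
  intro m hm
  induction m with
  | zero => simp
  | succ m ih =>
    obtain ⟨h, rfl⟩ := ih (by omega)
    have hh : h.natDegree < k := by
      rcases eq_or_ne h 0 with rfl | hne
      · simpa using hdeg
      · rw [(monic_X_sub_one_pow m).natDegree_mul' hne] at hdeg
        omega
    have hroot : X - 1 ∣ h := by
      rw [← C_1, dvd_iff_isRoot]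
      exact eval_one_eq_zero_of_coeff_sub_one_pow_mul_eq_zero hfrob (by omega) hM hh hcoeff
    rw [pow_succ]
    exact mul_dvd_mul_left _ hroot

end Polynomial

theorem polynomial_constraint_case_below_q_general
    (p : ℕ) (hp : p.Prime)
    {F : Type*} [Field F] [CharP F p]
    (n k : ℕ) (hnp : n < p)
    (g : Polynomial F) (hdeg : g.natDegree = n - 1)
    (hcoeff : ∀ j : ℕ, k + n ≤ 2 * j → j < k →
      ((Polynomial.X - 1) ^ k * g).coeff j = 0)
    (c : ℕ) (q : ℕ) (hq : q = p ^ c) (hqp : p < q)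
    (k0 : ℕ) (hk0 : p - n < k0) (hk0' : k0 < p)
    (hkq : k + p = q + k0) :
    (Polynomial.X - 1) ^ (p - k0) ∣ g := by
  have : Fact p.Prime := ⟨hp⟩
  have hfrob : (X - 1 : F[X]) ^ (k + (p - k0)) = X ^ (k + (p - k0)) - 1 := by
    rw [show k + (p - k0) = p ^ c by omega]
    simpa using sub_pow_char_pow (X : F[X]) (1 : F[X]) c
  have hc : 2 ≤ c := by
    by_contra! hc
    interval_cases c <;> simp_all
  have hpq : p * p ≤ q := by
    rw [hq, ← sq]
    exact Nat.pow_le_pow_right hp.pos hc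
  -- `k ≥ q - n ≥ p^2 - n` is large compared with `n < p`
  have hk : 3 * n ≤ k + 1 := by
    nlinarith [Nat.mul_le_mul hnp hnp, sq_nonneg ((n : ℤ) - 1)]
  exact sub_one_pow_dvd_of_coeff_sub_one_pow_mul_eq_zero (M := (k + n + 1) / 2) hfrob
    (by omega) (by omega) fun j hj hjk => hcoeff j (by omega) hjk

/-- **Theorem (polynomial result, assertion (d)).**
Let `F` have prime characteristic `p`, `1 < n < p`, `k > n + 1`, and let
`g ∈ F[x]` be monic of degree `n − 1` with `[x^j] (x−1)^k g(x) = 0` for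
`(k+n)/2 ≤ j < k`.  If `k = q − p + k0` for some power `q = p^c` of `p` with
`q > p` and some `k0` with `p − n < k0 < p`, then `(x − 1)^{p−k0}` divides `g`. -/
theorem polynomial_constraint_case_below_q
    (p : ℕ) (hp : p.Prime)
    {F : Type*} [Field F] [CharP F p]
    (n k : ℕ) (hn1 : 1 < n) (hnp : n < p) (hk : n + 1 < k)
    (g : Polynomial F) (hmonic : g.Monic) (hdeg : g.natDegree = n - 1)
    (hcoeff : ∀ j : ℕ, k + n ≤ 2 * j → j < k →
      ((Polynomial.X - 1) ^ k * g).coeff j = 0)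
    (c : ℕ) (q : ℕ) (hq : q = p ^ c) (hqp : p < q)
    (k0 : ℕ) (hk0 : p - n < k0) (hk0' : k0 < p)
    (hkq : k + p = q + k0) :
    (Polynomial.X - 1) ^ (p - k0) ∣ g :=
  polynomial_constraint_case_below_q_general p hp n k hnp g hdeg hcoeff c q hq hqp k0 hk0 hk0' hkq
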